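/- Tian–Pearl upper bound on PN: for every P as in the context, P(Y₀ = false ∧ X = true ∧ Y = true) ≤ P(Y₀ = false) − P(X = false ∧ Y = false); consequently, if P(X = true ∧ Y = true) > 0 then PN ≤ min {1, (P(Y₀ = false) − P(X = false ∧ Y = false)) / P(X = true ∧ Y = true)}. -/

import Mathlib

/-- The probability of an event `E` under a mass function `P` on a finite type. -/
noncomputable def prob {Ω : Type*} [Fintype Ω] (P : Ω → ℝ) (E : Set Ω) : ℝ :=
  ∑ ω, E.indicator P ω

/-- The binary counterfactual sample space: coordinates `(Y₀, Y₁, X)`, i.e. the potential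
outcomes `Y₀ = Y_{x'}` and `Y₁ = Y_x` and the treatment `X`. -/
abbrev BOmega : Type := Bool × Bool × Bool

/-- The observed outcome defined by consistency: `Y := if X then Y₁ else Y₀`. -/
def Yobs (ω : BOmega) : Bool := if ω.2.2 then ω.2.1 else ω.1

/-!
The events `{Y₀ = false, X = true, Y = true}` and `{X = false, Y = false}` are disjoint
(they disagree on `X`), and both lie inside `{Y₀ = false}`: the first trivially, the second
because consistency gives `Y = Y₀` when `X = false`. Hence their probabilities add up to at
most `P(Y₀ = false)`. The bound `PN ≤ 1` holds since the numerator event lies in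
`{X = true, Y = true}`.
-/

section prob

variable {Ω : Type*} [Fintype Ω] {P : Ω → ℝ} {E F G : Set Ω}

theorem prob_union_of_disjoint (h : Disjoint E F) :
    prob P (E ∪ F) = prob P E + prob P F := by
  simp only [prob, Set.indicator_union_of_disjoint h, Finset.sum_add_distrib]

theorem prob_mono (hP : ∀ ω, 0 ≤ P ω) (h : E ⊆ F) : prob P E ≤ prob P F :=
  Finset.sum_le_sum fun ω _ => Set.indicator_le_indicator_of_subset h hP ω

theorem prob_add_prob_le_of_disjoint (hP : ∀ ω, 0 ≤ P ω) (h : Disjoint E F)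
    (hE : E ⊆ G) (hF : F ⊆ G) : prob P E + prob P F ≤ prob P G := by
  rw [← prob_union_of_disjoint h]
  exact prob_mono hP (Set.union_subset hE hF)

end prob

theorem yobs_eq_of_treatment_false {ω : BOmega} (hX : ω.2.2 = false) : Yobs ω = ω.1 := by
  simp [Yobs, hX]

theorem tian_pearl_pn_upper_bound_general
    (P : BOmega → ℝ) (hP0 : ∀ ω, 0 ≤ P ω) :
    (prob P {ω | ω.1 = false ∧ ω.2.2 = true ∧ Yobs ω = true} ≤
      prob P {ω | ω.1 = false} - prob P {ω | ω.2.2 = false ∧ Yobs ω = false}) ∧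
    (0 < prob P {ω | ω.2.2 = true ∧ Yobs ω = true} →
      prob P {ω | ω.1 = false ∧ ω.2.2 = true ∧ Yobs ω = true} /
          prob P {ω | ω.2.2 = true ∧ Yobs ω = true} ≤
        min 1 ((prob P {ω | ω.1 = false} - prob P {ω | ω.2.2 = false ∧ Yobs ω = false}) /
          prob P {ω | ω.2.2 = true ∧ Yobs ω = true})) := by
  have hdisj : Disjoint {ω : BOmega | ω.1 = false ∧ ω.2.2 = true ∧ Yobs ω = true}
      {ω | ω.2.2 = false ∧ Yobs ω = false} :=
    Set.disjoint_left.2 fun ω h₁ h₂ => by simp_all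
  have hcons : {ω : BOmega | ω.2.2 = false ∧ Yobs ω = false} ⊆ {ω | ω.1 = false} :=
    fun ω ⟨hX, hY⟩ => (yobs_eq_of_treatment_false hX).symm.trans hY
  have hbound := prob_add_prob_le_of_disjoint (G := {ω : BOmega | ω.1 = false}) hP0 hdisj
    (fun ω h => h.1) hcons
  have hPN_le_one : prob P {ω | ω.1 = false ∧ ω.2.2 = true ∧ Yobs ω = true} ≤
      prob P {ω | ω.2.2 = true ∧ Yobs ω = true} :=
    prob_mono hP0 fun ω h => h.2
  refine ⟨by linarith, fun hpos => le_min ?_ ?_⟩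
  · exact div_le_one_of_le₀ hPN_le_one hpos.le
  · exact div_le_div_of_nonneg_right (by linarith) hpos.le

/-- Tian–Pearl upper bound on PN: `P(y'_{x'}, x, y) ≤ P(y'_{x'}) − P(x', y')`;
consequently, if `P(x, y) > 0` then `PN ≤ min {1, (P(y'_{x'}) − P(x', y')) / P(x, y)}`. -/
theorem tian_pearl_pn_upper_bound
    (P : BOmega → ℝ) (hP0 : ∀ ω, 0 ≤ P ω) (hP1 : ∑ ω, P ω = 1) :
    (prob P {ω | ω.1 = false ∧ ω.2.2 = true ∧ Yobs ω = true} ≤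
      prob P {ω | ω.1 = false} - prob P {ω | ω.2.2 = false ∧ Yobs ω = false}) ∧
    (0 < prob P {ω | ω.2.2 = true ∧ Yobs ω = true} →
      prob P {ω | ω.1 = false ∧ ω.2.2 = true ∧ Yobs ω = true} /
          prob P {ω | ω.2.2 = true ∧ Yobs ω = true} ≤
        min 1 ((prob P {ω | ω.1 = false} - prob P {ω | ω.2.2 = false ∧ Yobs ω = false}) /
          prob P {ω | ω.2.2 = true ∧ Yobs ω = true})) :=
  tian_pearl_pn_upper_bound_general P hP0
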